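/- Let L: ℝ^d → ℝ be a convex differentiable function and λ > 0. Suppose θ̂ minimizes θ ↦ L(θ) + λ‖θ‖₁, with associated dual vector ẑ defined by ∇L(θ̂) + λẑ = 0, where ẑ is a subgradient of ‖·‖₁ at θ̂ and satisfies ‖ẑ_{S^c}‖_∞ < 1 for an index set S. Then every minimizer θ̃ of θ ↦ L(θ) + λ‖θ‖₁ satisfies θ̃_{S^c} = 0. -/

import Mathlib

open scoped BigOperators

/-!
Convexity of `L` gives `L θ ≥ L θ̂ + ⟪∇L θ̂, θ - θ̂⟫ = L θ̂ + λ‖θ̂‖₁ - λ⟪ẑ, θ⟫`, because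
`⟪ẑ, θ̂⟫ = ‖θ̂‖₁` for a subgradient. Hence any `θ` whose objective value does not exceed that
of `θ̂` satisfies `‖θ‖₁ ≤ ⟪ẑ, θ⟫`. As `|ẑ_j| ≤ 1`, this forces `ẑ_j θ_j = |θ_j|` for every `j`,
which is impossible with `θ_j ≠ 0` when `|ẑ_j| < 1`.
-/

open Set

theorem ConvexOn.add_fderiv_sub_le {E : Type*} [NormedAddCommGroup E] [NormedSpace ℝ E]
    {s : Set E} {f : E → ℝ} {f' : E →L[ℝ] ℝ} {x y : E} (hf : ConvexOn ℝ s f)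
    (hx : x ∈ s) (hy : y ∈ s) (hf' : HasFDerivAt f f' x) :
    f x + f' (y - x) ≤ f y := by
  let γ := AffineMap.lineMap (k := ℝ) x y
  have hγ : HasDerivAt (f ∘ γ) (f' (y - x)) 0 := by
    refine HasFDerivAt.comp_hasDerivAt 0 ?_ AffineMap.hasDerivAt_lineMap
    simpa [γ] using hf'
  have hmem : ∀ t ∈ Icc (0 : ℝ) 1, t ∈ γ ⁻¹' s := fun t ht =>
    hf.1.lineMap_mem hx hy ht
  have hslope := (hf.comp_affineMap γ).le_slope_of_hasDerivAt (hmem 0 (by simp)) (hmem 1 (by simp))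
    zero_lt_one hγ
  simp only [slope_def_field, Function.comp_apply, γ, AffineMap.lineMap_apply_zero,
    AffineMap.lineMap_apply_one, sub_zero, div_one] at hslope
  linarith

theorem sum_mul_eq_sum_abs_of_sign {ι : Type*} [Fintype ι] {x z : ι → ℝ}
    (hz : ∀ i, x i ≠ 0 → z i = Real.sign (x i)) :
    ∑ i, z i * x i = ∑ i, |x i| := by
  refine Finset.sum_congr rfl fun i _ => ?_
  rcases lt_trichotomy (x i) 0 with h | h | h
  · rw [hz i h.ne, Real.sign_of_neg h, abs_of_neg h]; ring
  · simp [h]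
  · rw [hz i h.ne', Real.sign_of_pos h, abs_of_pos h]; ring

theorem eq_zero_of_sum_abs_le_sum_mul {ι : Type*} [Fintype ι] {x z : ι → ℝ}
    (hz : ∀ i, |z i| ≤ 1) (hxz : ∑ i, |x i| ≤ ∑ i, z i * x i) {j : ι} (hj : |z j| < 1) :
    x j = 0 := by
  have hle : ∀ i, z i * x i ≤ |x i| := fun i =>
    calc z i * x i ≤ |z i| * |x i| := (le_abs_self _).trans (abs_mul _ _).le
      _ ≤ |x i| := mul_le_of_le_one_left (abs_nonneg _) (hz i)
  have heq : ∀ i, z i * x i = |x i| := by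
    have hsum : ∑ i, (|x i| - z i * x i) = 0 := by
      rw [Finset.sum_sub_distrib]
      exact le_antisymm (by linarith) (sub_nonneg.2 (Finset.sum_le_sum fun i _ => hle i))
    intro i
    have := (Finset.sum_eq_zero_iff_of_nonneg fun i _ => sub_nonneg.2 (hle i)).1 hsum i
      (Finset.mem_univ i)
    linarith
  by_contra hne
  have : |x j| < |x j| :=
    calc |x j| = z j * x j := (heq j).symm
      _ ≤ |z j| * |x j| := (le_abs_self _).trans (abs_mul _ _).le
      _ < |x j| := mul_lt_of_lt_one_left (abs_pos.2 hne) hj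
  exact this.false

theorem lasso_objective_add_le {ι : Type*} [Fintype ι] {L : EuclideanSpace ℝ ι → ℝ}
    {lam : ℝ} {θhat z : EuclideanSpace ℝ ι} (hconv : ConvexOn ℝ univ L)
    (hdiff : DifferentiableAt ℝ L θhat) (hgrad : gradient L θhat + lam • z = 0)
    (hsub : ∀ j, θhat j ≠ 0 → z j = Real.sign (θhat j)) (θ : EuclideanSpace ℝ ι) :
    L θhat + lam * ∑ i, |θhat i| + lam * (∑ i, |θ i| - ∑ i, z i * θ i) ≤
      L θ + lam * ∑ i, |θ i| := by
  have hfo := hconv.add_fderiv_sub_le (mem_univ θhat) (mem_univ θ)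
    hdiff.hasGradientAt.hasFDerivAt
  have hlin : InnerProductSpace.toDual ℝ _ (gradient L θhat) (θ - θhat) =
      lam * ∑ i, |θhat i| - lam * ∑ i, z i * θ i := by
    rw [InnerProductSpace.toDual_apply_apply, eq_neg_of_add_eq_zero_left hgrad,
      ← sum_mul_eq_sum_abs_of_sign hsub, inner_neg_left, real_inner_smul_left,
      inner_sub_right, PiLp.inner_apply, PiLp.inner_apply]
    simp only [RCLike.inner_apply, conj_trivial, mul_comm]
    ring
  linarith

theorem stmt13_general (d : ℕ) (L : EuclideanSpace ℝ (Fin d) → ℝ)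
    (hconv : ConvexOn ℝ Set.univ L) (hdiff : Differentiable ℝ L)
    (lam : ℝ) (hlam : 0 < lam) (S : Finset (Fin d))
    (θhat zhat : EuclideanSpace ℝ (Fin d))
    (hgrad : gradient L θhat + lam • zhat = 0)
    (hsub1 : ∀ j, θhat j ≠ 0 → zhat j = Real.sign (θhat j))
    (hsub2 : ∀ j, |zhat j| ≤ 1)
    (hstrict : ∀ j ∉ S, |zhat j| < 1) :
    ∀ θtil : EuclideanSpace ℝ (Fin d),
      (∀ θ, L θtil + lam * ∑ i, |θtil i| ≤ L θ + lam * ∑ i, |θ i|) →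
      ∀ j ∉ S, θtil j = 0 := by
  intro θtil hmin j hj
  have hwitness := lasso_objective_add_le hconv (hdiff θhat) hgrad hsub1 θtil
  have hgap : lam * (∑ i, |θtil i| - ∑ i, zhat i * θtil i) ≤ 0 := by
    linarith [hmin θhat]
  have hdual : ∑ i, |θtil i| ≤ ∑ i, zhat i * θtil i :=
    sub_nonpos.1 (nonpos_of_mul_nonpos_right hgap hlam)
  exact eq_zero_of_sum_abs_le_sum_mul hsub2 hdual (hstrict j hj)

/-- Zero-pattern lemma (primal-dual witness): if `θ̂` minimizes `L(θ) + λ‖θ‖₁` with an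
associated dual `ẑ` (a subgradient of `‖·‖₁` at `θ̂` with `∇L(θ̂) + λẑ = 0`) satisfying
`‖ẑ_{Sᶜ}‖_∞ < 1`, then every minimizer `θ̃` satisfies `θ̃_{Sᶜ} = 0`. -/
theorem stmt13 (d : ℕ) (L : EuclideanSpace ℝ (Fin d) → ℝ)
    (hconv : ConvexOn ℝ Set.univ L) (hdiff : Differentiable ℝ L)
    (lam : ℝ) (hlam : 0 < lam) (S : Finset (Fin d))
    (θhat zhat : EuclideanSpace ℝ (Fin d))
    (hmin : ∀ θ, L θhat + lam * ∑ i, |θhat i| ≤ L θ + lam * ∑ i, |θ i|)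
    (hgrad : gradient L θhat + lam • zhat = 0)
    (hsub1 : ∀ j, θhat j ≠ 0 → zhat j = Real.sign (θhat j))
    (hsub2 : ∀ j, |zhat j| ≤ 1)
    (hstrict : ∀ j ∉ S, |zhat j| < 1) :
    ∀ θtil : EuclideanSpace ℝ (Fin d),
      (∀ θ, L θtil + lam * ∑ i, |θtil i| ≤ L θ + lam * ∑ i, |θ i|) →
      ∀ j ∉ S, θtil j = 0 :=
  stmt13_general d L hconv hdiff lam hlam S θhat zhat hgrad hsub1 hsub2 hstrict
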